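/- Let A ⊆ ℝ^m be compact satisfying dist(ξ, conv A) = dist(ξ, A) for all ξ ∉ conv A (Euclidean distance), let 1 ≤ q ≤ ∞, p ≥ 1, and define W(ξ,ζ) = dist_q^p((ξ,ζ), A × A) using the q-product norm. Then the separately convex envelope W^sc coincides with the convex envelope W^co, and is given by: W^sc(ξ,ζ) = 0 if ξ, ζ ∈ conv A; W^sc(ξ,ζ) = W(ξ,ζ) if ξ, ζ ∉ conv A; W^sc(ξ,ζ) = W(α,ζ) for any α ∈ A if ξ ∈ conv A, ζ ∉ conv A; and W^sc(ξ,ζ) = W(ξ,β) for any β ∈ A if ξ ∉ conv A, ζ ∈ conv A. -/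

import Mathlib

/-!
Both envelopes are `g = d ^ p`, with `d` the `q`-product distance to the convex set
`conv A × conv A`. The `q`-product distance from `(ξ, ζ)` to a product `S × T` is the `ℓ^q` norm
of `(dist(ξ, S), dist(ζ, T))` whenever both distances are attained. The hypothesis on `A` makes
nearest points of `A` nearest points of `conv A` and identifies `dist(·, conv A)` with
`dist(·, A)` off `conv A`, which yields the four formulas and `g ≤ W`.

`g` is convex as the `p`-th power of the distance to a convex set. Conversely, a separately convex
`h ≤ W` is at most `‖v‖_q ^ p` on the translate `A × A + v`, hence, by the maximum principle in
each variable separately, also on `conv A × conv A + v`; taking `v = z - k` for a nearest point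
`k` of `conv A × conv A` gives `h z ≤ g z`.
-/

open Set
open scoped ENNReal

/-- Distance of a point to a set, measured via the gauge `N`. -/
noncomputable def distTo {V : Type*} [AddCommGroup V] [Module ℝ V]
    (N : V → ℝ) (K : Set V) (x : V) : ℝ :=
  sInf ((fun k => N (x - k)) '' K)

/-- `g` is the convex envelope of `W`. -/
def IsConvexEnv {V : Type*} [AddCommGroup V] [Module ℝ V] (W g : V → ℝ) : Prop :=
  ConvexOn ℝ Set.univ g ∧ g ≤ W ∧
    ∀ h : V → ℝ, ConvexOn ℝ Set.univ h → h ≤ W → h ≤ g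

def SepConvexFn {V : Type*} [AddCommGroup V] [Module ℝ V] (f : V × V → ℝ) : Prop :=
  (∀ ξ : V, ConvexOn ℝ Set.univ fun ζ => f (ξ, ζ)) ∧
    (∀ ζ : V, ConvexOn ℝ Set.univ fun ξ => f (ξ, ζ))

/-- `g` is the separately convex envelope of `W`. -/
def IsSepConvexEnv {V : Type*} [AddCommGroup V] [Module ℝ V]
    (W g : V × V → ℝ) : Prop :=
  SepConvexFn g ∧ g ≤ W ∧
    ∀ h : V × V → ℝ, SepConvexFn h → h ≤ W → h ≤ g

open Metric
open scoped Pointwise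

section DistTo

variable {E : Type*} [AddCommGroup E] [Module ℝ E]

lemma distTo_nonneg {N : E → ℝ} (hN : ∀ v, 0 ≤ N v) (K : Set E) (x : E) :
    0 ≤ distTo N K x :=
  Real.sInf_nonneg (by rintro _ ⟨k, -, rfl⟩; exact hN _)

lemma distTo_le {N : E → ℝ} (hN : ∀ v, 0 ≤ N v) {K : Set E} {k : E} (hk : k ∈ K) (x : E) :
    distTo N K x ≤ N (x - k) :=
  csInf_le ⟨0, by rintro _ ⟨k', -, rfl⟩; exact hN _⟩ ⟨k, hk, rfl⟩

lemma Seminorm.convexOn_distTo (N : Seminorm ℝ E) {K : Set E} (hK : Convex ℝ K)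
    (hKne : K.Nonempty) : ConvexOn ℝ univ (distTo N K) := by
  refine ⟨convex_univ, fun x _ y _ a b ha hb hab => ?_⟩
  refine le_of_forall_pos_le_add fun ε hε => ?_
  obtain ⟨_, ⟨k, hk, rfl⟩, hxk⟩ := Real.lt_sInf_add_pos (hKne.image fun k => N (x - k)) hε
  obtain ⟨_, ⟨l, hl, rfl⟩, hyl⟩ := Real.lt_sInf_add_pos (hKne.image fun k => N (y - k)) hε
  calc distTo N K (a • x + b • y)
      ≤ N (a • (x - k) + b • (y - l)) := by
        convert distTo_le (apply_nonneg N) (hK hk hl ha hb hab) _ using 2; module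
    _ ≤ a * N (x - k) + b * N (y - l) := by
        grw [map_add_le_add, map_smul_eq_mul, map_smul_eq_mul, Real.norm_of_nonneg ha,
          Real.norm_of_nonneg hb]
    _ ≤ a * (distTo N K x + ε) + b * (distTo N K y + ε) := by
        gcongr; exacts [hxk.le, hyl.le]
    _ = a • distTo N K x + b • distTo N K y + ε := by
        simp only [smul_eq_mul]; linear_combination ε * hab

end DistTo

lemma ConvexOn.rpow {E : Type*} [AddCommGroup E] [Module ℝ E] {s : Set E} {f : E → ℝ}
    (hf : ConvexOn ℝ s f) (hf₀ : ∀ x ∈ s, 0 ≤ f x) {p : ℝ} (hp : 1 ≤ p) :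
    ConvexOn ℝ s fun x => f x ^ p := by
  refine ⟨hf.1, fun x hx y hy a b ha hb hab => ?_⟩
  calc f (a • x + b • y) ^ p ≤ (a • f x + b • f y) ^ p :=
        Real.rpow_le_rpow (hf₀ _ (hf.1 hx hy ha hb hab)) (hf.2 hx hy ha hb hab) (by linarith)
    _ ≤ a • f x ^ p + b • f y ^ p :=
        (convexOn_rpow hp).2 (hf₀ x hx) (hf₀ y hy) ha hb hab

namespace WithLp

variable {q : ℝ≥0∞} {α β α' β' : Type*} [SeminormedAddCommGroup α] [SeminormedAddCommGroup β]
  [SeminormedAddCommGroup α'] [SeminormedAddCommGroup β']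

lemma prod_norm_toLp_le (hq : q ≠ 0) {x : α} {x' : α'} {y : β} {y' : β'} (hx : ‖x‖ ≤ ‖x'‖)
    (hy : ‖y‖ ≤ ‖y'‖) : ‖toLp q (x, y)‖ ≤ ‖toLp q (x', y')‖ := by
  rcases eq_or_ne q ⊤ with rfl | hq'
  · simpa only [prod_norm_eq_sup, toLp_fst, toLp_snd] using sup_le_sup hx hy
  · have hq₀ := ENNReal.toReal_pos hq hq'
    simp only [prod_norm_eq_add hq₀, toLp_fst, toLp_snd]
    gcongr

lemma prod_norm_toLp_eq_of_norm_eq (hq : q ≠ 0) {x : α} {x' : α'} {y : β} {y' : β'}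
    (hx : ‖x‖ = ‖x'‖) (hy : ‖y‖ = ‖y'‖) : ‖toLp q (x, y)‖ = ‖toLp q (x', y')‖ :=
  (prod_norm_toLp_le hq hx.le hy.le).antisymm (prod_norm_toLp_le hq hx.ge hy.ge)

end WithLp

lemma distTo_prod_eq_norm_toLp_infDist {q : ℝ≥0∞} (hq : q ≠ 0) {E F : Type*}
    [SeminormedAddCommGroup E] [NormedSpace ℝ E] [SeminormedAddCommGroup F] [NormedSpace ℝ F]
    {S : Set E} {T : Set F} {ξ : E} {ζ : F}
    (hS : ∃ s ∈ S, infDist ξ S = dist ξ s) (hT : ∃ t ∈ T, infDist ζ T = dist ζ t) :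
    distTo (fun z => ‖WithLp.toLp q z‖) (S ×ˢ T) (ξ, ζ) =
      ‖WithLp.toLp q (infDist ξ S, infDist ζ T)‖ := by
  obtain ⟨s, hs, hξs⟩ := hS
  obtain ⟨t, ht, hζt⟩ := hT
  refine IsLeast.csInf_eq ⟨⟨(s, t), ⟨hs, ht⟩, ?_⟩, ?_⟩
  · change ‖WithLp.toLp q (ξ - s, ζ - t)‖ = _
    refine WithLp.prod_norm_toLp_eq_of_norm_eq hq ?_ ?_ <;>
      rw [Real.norm_of_nonneg infDist_nonneg, ← dist_eq_norm, ‹infDist _ _ = _›]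
  · rintro _ ⟨⟨s', t'⟩, ⟨hs', ht'⟩, rfl⟩
    change _ ≤ ‖WithLp.toLp q (ξ - s', ζ - t')‖
    refine WithLp.prod_norm_toLp_le hq ?_ ?_ <;>
      rw [Real.norm_of_nonneg infDist_nonneg, ← dist_eq_norm] <;>
      exact infDist_le_dist_of_mem ‹_›

lemma exists_infDist_convexHull_eq_dist {E : Type*} [NormedAddCommGroup E] [NormedSpace ℝ E]
    {A : Set E} (hAc : IsCompact A) (hAne : A.Nonempty)
    (hdist : ∀ ξ ∉ convexHull ℝ A, infDist ξ (convexHull ℝ A) = infDist ξ A) (ξ : E) :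
    ∃ c ∈ convexHull ℝ A, infDist ξ (convexHull ℝ A) = dist ξ c := by
  by_cases hξ : ξ ∈ convexHull ℝ A
  · exact ⟨ξ, hξ, by rw [infDist_zero_of_mem hξ, dist_self]⟩
  · obtain ⟨a, ha, hξa⟩ := hAc.exists_infDist_eq_dist hAne ξ
    exact ⟨a, subset_convexHull ℝ A ha, by rw [hdist ξ hξ, hξa]⟩

section SepConvex

variable {V : Type*} [AddCommGroup V] [Module ℝ V]

lemma ConvexOn.sepConvexFn {f : V × V → ℝ} (hf : ConvexOn ℝ univ f) : SepConvexFn f := by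
  refine ⟨fun ξ => ⟨convex_univ, fun x _ y _ a b ha hb hab => ?_⟩,
    fun ζ => ⟨convex_univ, fun x _ y _ a b ha hb hab => ?_⟩⟩
  · have := hf.2 (mem_univ (ξ, x)) (mem_univ (ξ, y)) ha hb hab
    rwa [Prod.smul_mk, Prod.smul_mk, Prod.mk_add_mk, Convex.combo_self hab] at this
  · have := hf.2 (mem_univ (x, ζ)) (mem_univ (y, ζ)) ha hb hab
    rwa [Prod.smul_mk, Prod.smul_mk, Prod.mk_add_mk, Convex.combo_self hab] at this

lemma SepConvexFn.le_of_mem_convexHull_prod {h : V × V → ℝ} (hh : SepConvexFn h)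
    {S T : Set V} {c : ℝ} (hc : ∀ s ∈ S, ∀ t ∈ T, h (s, t) ≤ c) {ξ ζ : V}
    (hξ : ξ ∈ convexHull ℝ S) (hζ : ζ ∈ convexHull ℝ T) : h (ξ, ζ) ≤ c := by
  obtain ⟨s, hs, hξs⟩ := (hh.2 ζ).exists_ge_of_mem_convexHull (subset_univ _) hξ
  obtain ⟨t, ht, hst⟩ := (hh.1 s).exists_ge_of_mem_convexHull (subset_univ _) hζ
  exact hξs.trans (hst.trans (hc s hs t ht))

lemma SepConvexFn.le_comp_sub_of_mem_convexHull_prod {h : V × V → ℝ} (hh : SepConvexFn h)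
    {S T : Set V} {G : V × V → ℝ} (hG : ∀ z, ∀ k ∈ S ×ˢ T, h z ≤ G (z - k)) (z : V × V)
    {k : V × V} (hk : k ∈ convexHull ℝ S ×ˢ convexHull ℝ T) : h z ≤ G (z - k) := by
  set v := z - k
  have hz : z = (v.1 + k.1, v.2 + k.2) := by simp [v]
  have hmem : ∀ (w : V) {R : Set V} {x : V}, x ∈ convexHull ℝ R →
      w + x ∈ convexHull ℝ (w +ᵥ R) := fun w R x hx => by
    rw [convexHull_vadd]; exact vadd_mem_vadd_set hx
  rw [hz]
  refine hh.le_of_mem_convexHull_prod ?_ (hmem v.1 hk.1) (hmem v.2 hk.2)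
  rintro _ ⟨s, hs, rfl⟩ _ ⟨t, ht, rfl⟩
  simpa using hG (v.1 + s, v.2 + t) (s, t) ⟨hs, ht⟩

end SepConvex

lemma SepConvexFn.le_norm_toLp_infDist_convexHull_rpow {q : ℝ≥0∞} [Fact (1 ≤ q)] {E : Type*}
    [NormedAddCommGroup E] [NormedSpace ℝ E] {A : Set E}
    (hnear : ∀ ξ : E, ∃ c ∈ convexHull ℝ A, infDist ξ (convexHull ℝ A) = dist ξ c)
    {p : ℝ} (hp : 0 ≤ p) {h : E × E → ℝ} (hh : SepConvexFn h)
    (hhW : ∀ z, h z ≤ distTo (fun z => ‖WithLp.toLp q z‖) (A ×ˢ A) z ^ p) (ξ ζ : E) :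
    h (ξ, ζ) ≤
      ‖WithLp.toLp q (infDist ξ (convexHull ℝ A), infDist ζ (convexHull ℝ A))‖ ^ p := by
  have hq₀ : q ≠ 0 := (zero_lt_one.trans_le Fact.out).ne'
  obtain ⟨c₁, hc₁, hξc₁⟩ := hnear ξ
  obtain ⟨c₂, hc₂, hζc₂⟩ := hnear ζ
  have hN : ∀ v : E × E, 0 ≤ ‖WithLp.toLp q v‖ := fun _ => norm_nonneg _
  have hG : ∀ z, ∀ k ∈ A ×ˢ A, h z ≤ ‖WithLp.toLp q (z - k)‖ ^ p := fun z k hk =>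
    (hhW z).trans <| Real.rpow_le_rpow (distTo_nonneg hN _ _) (distTo_le hN hk z) hp
  calc h (ξ, ζ) ≤ ‖WithLp.toLp q ((ξ, ζ) - (c₁, c₂))‖ ^ p :=
        hh.le_comp_sub_of_mem_convexHull_prod (G := fun v => ‖WithLp.toLp q v‖ ^ p) hG _
          ⟨hc₁, hc₂⟩
    _ = _ := by
        rw [Prod.mk_sub_mk]
        congr 1
        refine WithLp.prod_norm_toLp_eq_of_norm_eq hq₀ ?_ ?_ <;>
          rw [Real.norm_of_nonneg infDist_nonneg, ← dist_eq_norm, ‹infDist _ _ = _›]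

theorem stmt18 {m : ℕ}
    (A : Set (EuclideanSpace ℝ (Fin m))) (hAne : A.Nonempty) (hAc : IsCompact A)
    (hdist : ∀ ξ : EuclideanSpace ℝ (Fin m), ξ ∉ convexHull ℝ A →
      Metric.infDist ξ (convexHull ℝ A) = Metric.infDist ξ A)
    (q : ℝ≥0∞) (hq : 1 ≤ q) (p : ℝ) (hp : 1 ≤ p)
    (Nq : EuclideanSpace ℝ (Fin m) × EuclideanSpace ℝ (Fin m) → ℝ)
    (hNq₁ : q ≠ ⊤ → ∀ z, Nq z = (‖z.1‖ ^ q.toReal + ‖z.2‖ ^ q.toReal) ^ (1 / q.toReal))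
    (hNq₂ : q = ⊤ → ∀ z, Nq z = max ‖z.1‖ ‖z.2‖)
    (W : EuclideanSpace ℝ (Fin m) × EuclideanSpace ℝ (Fin m) → ℝ)
    (hW : ∀ z, W z = distTo Nq (A ×ˢ A) z ^ p) :
    ∃ g : EuclideanSpace ℝ (Fin m) × EuclideanSpace ℝ (Fin m) → ℝ,
      IsSepConvexEnv W g ∧ IsConvexEnv W g ∧
      (∀ ξ ζ, ξ ∈ convexHull ℝ A → ζ ∈ convexHull ℝ A → g (ξ, ζ) = 0) ∧
      (∀ ξ ζ, ξ ∉ convexHull ℝ A → ζ ∉ convexHull ℝ A → g (ξ, ζ) = W (ξ, ζ)) ∧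
      (∀ ξ ζ α, ξ ∈ convexHull ℝ A → ζ ∉ convexHull ℝ A → α ∈ A →
        g (ξ, ζ) = W (α, ζ)) ∧
      (∀ ξ ζ β, ξ ∉ convexHull ℝ A → ζ ∈ convexHull ℝ A → β ∈ A →
        g (ξ, ζ) = W (ξ, β)) := by
  have : Fact (1 ≤ q) := ⟨hq⟩
  have hq₀ : q ≠ 0 := (zero_lt_one.trans_le hq).ne'
  obtain rfl : Nq = fun z => ‖WithLp.toLp q z‖ := by
    funext z
    rcases eq_or_ne q ⊤ with rfl | hq'
    · rw [hNq₂ rfl, WithLp.prod_norm_eq_sup]; rfl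
    · rw [hNq₁ hq', WithLp.prod_norm_eq_add (ENNReal.toReal_pos hq₀ hq')]; rfl
  set C := convexHull ℝ A
  set N : Seminorm ℝ (EuclideanSpace ℝ (Fin m) × EuclideanSpace ℝ (Fin m)) :=
    (normSeminorm ℝ _).comp (WithLp.linearEquiv q ℝ _).symm.toLinearMap
  set g := fun z => distTo N (C ×ˢ C) z ^ p
  have hCne : C.Nonempty := hAne.mono (subset_convexHull ℝ A)
  have hnearC := exists_infDist_convexHull_eq_dist hAc hAne hdist
  have hg : ∀ ξ ζ, g (ξ, ζ) = ‖WithLp.toLp q (infDist ξ C, infDist ζ C)‖ ^ p := fun ξ ζ => by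
    rw [← distTo_prod_eq_norm_toLp_infDist hq₀ (hnearC ξ) (hnearC ζ)]; rfl
  have hW' : ∀ ξ ζ, W (ξ, ζ) = ‖WithLp.toLp q (infDist ξ A, infDist ζ A)‖ ^ p := fun ξ ζ => by
    rw [hW, distTo_prod_eq_norm_toLp_infDist hq₀ (hAc.exists_infDist_eq_dist hAne ξ)
      (hAc.exists_infDist_eq_dist hAne ζ)]
  have hgconv : ConvexOn ℝ univ g :=
    (N.convexOn_distTo ((convex_convexHull ℝ A).prod (convex_convexHull ℝ A))
      (hCne.prod hCne)).rpow (fun z _ => distTo_nonneg (apply_nonneg N) _ z) hp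
  have hgW : g ≤ W := by
    rintro ⟨ξ, ζ⟩
    rw [hg, hW']
    gcongr
    refine WithLp.prod_norm_toLp_le hq₀ ?_ ?_ <;>
      rw [Real.norm_of_nonneg infDist_nonneg, Real.norm_of_nonneg infDist_nonneg] <;>
      exact infDist_le_infDist_of_subset (subset_convexHull ℝ A) hAne
  have hmax : ∀ h, SepConvexFn h → h ≤ W → h ≤ g := by
    rintro h hh hhW ⟨ξ, ζ⟩
    rw [hg]
    exact hh.le_norm_toLp_infDist_convexHull_rpow hnearC (by linarith)
      (fun z => (hhW z).trans_eq (hW z)) ξ ζ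
  refine ⟨g, ⟨hgconv.sepConvexFn, hgW, hmax⟩,
    ⟨hgconv, hgW, fun h hh => hmax h hh.sepConvexFn⟩, ?_, ?_, ?_, ?_⟩
  · intro ξ ζ hξ hζ
    rw [hg, infDist_zero_of_mem hξ, infDist_zero_of_mem hζ, ← Prod.zero_eq_mk, WithLp.toLp_zero,
      norm_zero, Real.zero_rpow (by linarith)]
  · intro ξ ζ hξ hζ
    rw [hg, hW', hdist ξ hξ, hdist ζ hζ]
  · intro ξ ζ α hξ hζ hα
    rw [hg, hW', infDist_zero_of_mem hξ, infDist_zero_of_mem hα, hdist ζ hζ]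
  · intro ξ ζ β hξ hζ hβ
    rw [hg, hW', infDist_zero_of_mem hζ, infDist_zero_of_mem hβ, hdist ξ hξ]
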